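/- Let 0 ≤ b < d, φ(x) := exp(−x²/2) and m̂ := ∫_b^d φ(x) dx. Then ∫_b^d φ(z) ( ∫_{−z}^d ( ∫_{max(b,y)}^d φ(x) dx ) dy ) dz = 2 m̂ ( φ(b) − φ(d) ). -/

import Mathlib

open MeasureTheory Real

/-- `φ(x) = exp(−x²/2)`. -/
noncomputable def phi (x : ℝ) : ℝ := Real.exp (-(x ^ 2 / 2))

/-!
For `y ≤ b` the inner integral is the constant `m̂`, and on `[b, d]` the repeated integral
`∫_b^d ∫_y^d φ` is `∫_b^d (x - b) φ(x) dx` by parts; together, for `z ≥ b ≥ 0`,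
`∫_{−z}^d ∫_{max(b,y)}^d φ = ∫_b^d (x + z) φ(x) dx = (φ(b) − φ(d)) + z m̂`, since `−φ` is a
primitive of `x φ(x)`. Integrating against `φ(z)` gives `m̂ (φ(b) − φ(d))` twice over.
-/

@[fun_prop]
theorem continuous_phi : Continuous phi := by
  unfold phi; fun_prop

theorem hasDerivAt_neg_phi (x : ℝ) : HasDerivAt (fun t => -phi t) (x * phi x) x :=
  ((((hasDerivAt_pow 2 x).div_const 2).fun_neg).exp).fun_neg.congr_deriv
    (by simp only [phi]; ring)

theorem integral_mul_phi (a c : ℝ) : ∫ x in a..c, x * phi x = phi a - phi c := by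
  rw [intervalIntegral.integral_eq_sub_of_hasDerivAt (fun x _ => hasDerivAt_neg_phi x)
    (Continuous.intervalIntegrable (by fun_prop) a c)]
  ring

namespace intervalIntegral

variable {f : ℝ → ℝ}

theorem continuous_integral_left (hf : Continuous f) (d : ℝ) :
    Continuous fun u => ∫ x in u..d, f x :=
  continuous_iff_continuousAt.2 fun u =>
    (integral_hasDerivAt_left (hf.intervalIntegrable u d) (hf.stronglyMeasurableAtFilter _ _)
      hf.continuousAt).continuousAt

/-- Cauchy's formula for the repeated integral. -/
theorem integral_integral_left_eq_integral_sub_mul (hf : Continuous f) (b d : ℝ) :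
    ∫ y in b..d, ∫ x in y..d, f x = ∫ x in b..d, (x - b) * f x := by
  have hparts := integral_mul_deriv_eq_deriv_mul (u := fun y => y - b) (u' := fun _ => 1)
    (v := fun y => ∫ x in y..d, f x) (v' := fun y => -f y)
    (fun y _ => (hasDerivAt_id y).sub_const b)
    (fun y _ => integral_hasDerivAt_left (hf.intervalIntegrable y d)
      (hf.stronglyMeasurableAtFilter _ _) hf.continuousAt)
    intervalIntegrable_const (hf.neg.intervalIntegrable b d)
  simp only [mul_neg, integral_neg, integral_same, sub_self, mul_zero, zero_mul, one_mul] at hparts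
  linarith

theorem integral_integral_max_eq_integral_sub_mul (hf : Continuous f) {a b d : ℝ}
    (hab : a ≤ b) (hbd : b ≤ d) :
    ∫ y in a..d, ∫ x in (max b y)..d, f x = ∫ x in b..d, (x - a) * f x := by
  have hcont : Continuous fun y => ∫ x in (max b y)..d, f x :=
    (continuous_integral_left hf d).comp (continuous_const.max continuous_id)
  have below : ∫ y in a..b, ∫ x in (max b y)..d, f x = (b - a) * ∫ x in b..d, f x := by
    rw [integral_congr (g := fun _ => ∫ x in b..d, f x), integral_const, smul_eq_mul]
    intro y hy
    rw [Set.uIcc_of_le hab] at hy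
    simp only [max_eq_left hy.2]
  have above : ∫ y in b..d, ∫ x in (max b y)..d, f x = ∫ y in b..d, ∫ x in y..d, f x := by
    refine integral_congr fun y hy => ?_
    rw [Set.uIcc_of_le hbd] at hy
    simp only [max_eq_right hy.1]
  rw [← integral_add_adjacent_intervals (hcont.intervalIntegrable a b)
      (hcont.intervalIntegrable b d), below, above,
    integral_integral_left_eq_integral_sub_mul hf, ← integral_const_mul,
    ← integral_add (Continuous.intervalIntegrable (u := fun x => (b - a) * f x) (by fun_prop) b d)
      (Continuous.intervalIntegrable (u := fun x => (x - b) * f x) (by fun_prop) b d)]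
  exact integral_congr fun x _ => by ring

end intervalIntegral

/-- the exact triple-integral identity
`∫_b^d φ(z) (∫_{−z}^d (∫_{max(b,y)}^d φ(x) dx) dy) dz = 2 m̂ (φ(b) − φ(d))`. -/
theorem triple_integral_identity (b d : ℝ) (hb : 0 ≤ b) (hbd : b < d) :
    (∫ z in b..d, phi z * ∫ y in (-z)..d, ∫ x in (max b y)..d, phi x)
      = 2 * (∫ x in b..d, phi x) * (phi b - phi d) := by
  set M := ∫ x in b..d, phi x
  have inner : ∀ z ∈ Set.uIcc b d,
      ∫ y in (-z)..d, ∫ x in (max b y)..d, phi x = (phi b - phi d) + z * M := by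
    intro z hz
    rw [Set.uIcc_of_le hbd.le] at hz
    have hzb : -z ≤ b := by linarith [hz.1]
    rw [intervalIntegral.integral_integral_max_eq_integral_sub_mul continuous_phi hzb hbd.le]
    simp only [sub_neg_eq_add, add_mul]
    rw [intervalIntegral.integral_add (Continuous.intervalIntegrable (by fun_prop) b d)
      (Continuous.intervalIntegrable (by fun_prop) b d),
      integral_mul_phi, intervalIntegral.integral_const_mul]
  calc (∫ z in b..d, phi z * ∫ y in (-z)..d, ∫ x in (max b y)..d, phi x)
      = ∫ z in b..d, ((phi b - phi d) * phi z + M * (z * phi z)) :=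
        intervalIntegral.integral_congr fun z hz => by simp only [inner z hz]; ring
    _ = 2 * M * (phi b - phi d) := by
        rw [intervalIntegral.integral_add (Continuous.intervalIntegrable (by fun_prop) b d)
          (Continuous.intervalIntegrable (by fun_prop) b d),
          intervalIntegral.integral_const_mul, intervalIntegral.integral_const_mul, integral_mul_phi]
        ring
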